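/- arXiv:2502.18944 — 2 statements merged into one kernel-verified Lean document; each statement's English description precedes it below -/
import Mathlib

section
/- Let G be a finite thin 2-qBMG with color classes U and W, and let U₁ ⊆ U and W₁ ⊆ W be orbits of Aut(G). Let G₁ be the subdigraph of G induced on U₁ ∪ W₁, and suppose there exist x₁ ∈ U₁ and y₁ ∈ W₁ with x₁y₁ ∈ E. Then one of the following holds: (i) G₁ is a disjoint union of directed stars with centers in U₁: no edge of G₁ has its tail in W₁, every vertex of W₁ has exactly one in-neighbor within G₁, distinct vertices of U₁ have disjoint out-neighborhoods in G₁, every vertex of U₁ has the same out-degree d in G₁, and d·|U₁| = |W₁| (in particular, if |U₁| = |W₁| then G₁ consists of |U₁| pairwise vertex-disjoint edges directed from U₁ to W₁); or (ii) the edge set of G₁ is a union of pairwise vertex-disjoint symmetric edges forming a perfect matching between U₁ and W₁, i.e., every vertex of U₁ ∪ W₁ lies on exactly one symmetric edge of G₁ and G₁ has no other edges. -/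
/-- Two vertices are equivalent (`x ∼̇ y`) if they have the same
out-neighbors and the same in-neighbors. -/
def dotSim {V : Type*} (E : V → V → Prop) (x y : V) : Prop :=
  (∀ z, E x z ↔ E y z) ∧ (∀ z, E z x ↔ E z y)

/-- `U` and `W` are the color classes of a 2-colored digraph with edge relation `E`:
they partition the vertex set and every edge has one endpoint in each class. -/
def IsTwoColored {V : Type*} (E : V → V → Prop) (U W : Set V) : Prop :=
  (∀ v, v ∈ U ∨ v ∈ W) ∧ (∀ v, ¬(v ∈ U ∧ v ∈ W)) ∧
    ∀ u v, E u v → (u ∈ U ∧ v ∈ W) ∨ (u ∈ W ∧ v ∈ U)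

/-- Axiom (N1). -/
def AxN1 {V : Type*} (E : V → V → Prop) : Prop :=
  ∀ u v, u ≠ v → ¬E u v → ¬E v u → ∀ w t, ¬(E u t ∧ E v w ∧ E t w)

/-- Axiom (N2): bi-transitivity. -/
def AxN2 {V : Type*} (E : V → V → Prop) : Prop :=
  ∀ u v w t, E u v → E v w → E w t → E u t

/-- Axiom (N3). -/
def AxN3 {V : Type*} (E : V → V → Prop) : Prop :=
  ∀ u v w, E u w → E v w → (∀ z, E u z → E v z) ∨ (∀ z, E v z → E u z)

/-- A 2-qBMG: an irreflexive 2-colored digraph satisfying (N1), (N2), (N3). -/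
def IsQBMG {V : Type*} (E : V → V → Prop) (U W : Set V) : Prop :=
  (∀ v, ¬E v v) ∧ IsTwoColored E U W ∧ AxN1 E ∧ AxN2 E ∧ AxN3 E

/-- An automorphism of the digraph: a permutation mapping edges to edges. -/
def IsAut {V : Type*} (E : V → V → Prop) (π : Equiv.Perm V) : Prop :=
  ∀ u v, E u v → E (π u) (π v)

/-- A color-preserving automorphism of the 2-colored digraph. -/
def IsAutI {V : Type*} (E : V → V → Prop) (U W : Set V) (π : Equiv.Perm V) : Prop :=
  IsAut E π ∧ (∀ v ∈ U, π v ∈ U) ∧ (∀ v ∈ W, π v ∈ W)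

/-- `O` is an orbit of `Aut(G)` on the vertex set. -/
def IsAutOrbit {V : Type*} (E : V → V → Prop) (O : Set V) : Prop :=
  O.Nonempty ∧ ∀ x ∈ O, ∀ y, (y ∈ O ↔ ∃ g : Equiv.Perm V, IsAut E g ∧ g x = y)

/-!
The crux is that two vertices `x, x'` of one `Aut(G)`-orbit inside a color class that share an
out-neighbor coincide. By (N3) their out-neighborhoods are nested, and by (N1) and (N2) so are
their in-neighborhoods; an automorphism mapping `x` to `x'` shows that the nested sets have the
same size, so `x ∼̇ x'`, and thinness gives `x = x'`. Hence every `y ∈ W₁` has exactly one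
in-neighbor in `U₁`, and every `x ∈ U₁` at most one in-neighbor in `W₁`.

If no edge runs from `W₁` to `U₁`, the out-degree into `W₁` is constant along the orbit `U₁`,
and double counting gives `d·|U₁| = |W₁|`. If some edge `y₀x₀` runs back, move `x₁y₁` to edges
`x₀y` and `xy₀`; (N2) along `x → y₀ → x₀ → y` gives `xy ∈ E`, so `x = x₀` and `x₀y₀` is a
symmetric edge. Transporting it along the orbits and using the uniqueness of in-neighbors makes
every edge between `U₁` and `W₁` symmetric.
-/

theorem Set.eq_of_subset_or_subset_of_ncard_eq {α : Type*} [Finite α] {s t : Set α}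
    (h : s ⊆ t ∨ t ⊆ s) (hst : s.ncard = t.ncard) : s = t :=
  h.elim (fun h => Set.eq_of_subset_of_ncard_le h hst.ge)
    (fun h => (Set.eq_of_subset_of_ncard_le h hst.le).symm)

theorem mul_ncard_eq_ncard_of_existsUnique {α β : Type*} [Finite α] [Finite β]
    {R : α → β → Prop} {A : Set α} {B : Set β} {d : ℕ}
    (hA : ∀ a ∈ A, {b ∈ B | R a b}.ncard = d) (hB : ∀ b ∈ B, ∃! a, a ∈ A ∧ R a b) :
    d * A.ncard = B.ncard := by
  classical
  have := Fintype.ofFinite α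
  have := Fintype.ofFinite β
  have key := Finset.card_mul_eq_card_mul R (s := A.toFinset) (t := B.toFinset) (m := d) (n := 1)
    (fun a ha => by
      rw [← hA a (Set.mem_toFinset.mp ha), Set.ncard_eq_toFinset_card']
      congr 1
      ext b
      simp [Finset.bipartiteAbove])
    (fun b hb => by
      obtain ⟨a, ha, hu⟩ := hB b (Set.mem_toFinset.mp hb)
      rw [Finset.card_eq_one]
      refine ⟨a, ?_⟩
      ext a'
      simp only [Finset.bipartiteBelow, Finset.mem_filter, Set.mem_toFinset,
        Finset.mem_singleton]
      exact ⟨fun h => hu a' h, fun h => h ▸ ha⟩)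
  rw [Set.ncard_eq_toFinset_card', Set.ncard_eq_toFinset_card', mul_comm, key, mul_one]

section
variable {V : Type*} {E : V → V → Prop}

namespace IsAut

theorem pow {g : Equiv.Perm V} (hg : IsAut E g) : ∀ n : ℕ, IsAut E (g ^ n)
  | 0 => fun _ _ h => h
  | n + 1 => fun u v h => by
      simpa only [pow_succ', Equiv.Perm.mul_apply] using hg _ _ (hg.pow n u v h)

theorem inv [Finite V] {g : Equiv.Perm V} (hg : IsAut E g) : IsAut E g⁻¹ := by
  obtain ⟨n, hn⟩ : g⁻¹ ∈ Submonoid.powers g :=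
    mem_powers_iff_mem_zpowers.mpr (inv_mem (Subgroup.mem_zpowers g))
  exact hn ▸ hg.pow n

theorem apply_iff [Finite V] {g : Equiv.Perm V} (hg : IsAut E g) {u v : V} :
    E (g u) (g v) ↔ E u v :=
  ⟨fun h => by simpa using hg.inv _ _ h, hg u v⟩

theorem ncard_setOf_apply_adj [Finite V] {g : Equiv.Perm V} (hg : IsAut E g) (x : V) :
    {z | E (g x) z}.ncard = {z | E x z}.ncard := by
  rw [← Set.ncard_preimage_of_injective_subset_range g.injective (by simp)]
  simp only [Set.preimage_ofPred_eq, hg.apply_iff]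

theorem ncard_setOf_adj_apply [Finite V] {g : Equiv.Perm V} (hg : IsAut E g) (x : V) :
    {z | E z (g x)}.ncard = {z | E z x}.ncard := by
  rw [← Set.ncard_preimage_of_injective_subset_range g.injective (by simp)]
  simp only [Set.preimage_ofPred_eq, hg.apply_iff]

theorem ncard_sep_apply_adj [Finite V] {g : Equiv.Perm V} (hg : IsAut E g) {S : Set V}
    (hS : ∀ v, g v ∈ S ↔ v ∈ S) (x : V) :
    {z ∈ S | E (g x) z}.ncard = {z ∈ S | E x z}.ncard := by
  rw [← Set.ncard_preimage_of_injective_subset_range g.injective (by simp)]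
  simp only [Set.preimage_ofPred_eq, hS, hg.apply_iff]

end IsAut

namespace IsAutOrbit

variable {O O' : Set V}

theorem apply_mem (hO : IsAutOrbit E O) {x : V} (hx : x ∈ O) {g : Equiv.Perm V}
    (hg : IsAut E g) : g x ∈ O :=
  (hO.2 x hx (g x)).mpr ⟨g, hg, rfl⟩

theorem apply_mem_iff [Finite V] (hO : IsAutOrbit E O) {g : Equiv.Perm V} (hg : IsAut E g)
    (v : V) : g v ∈ O ↔ v ∈ O :=
  ⟨fun h => by simpa using hO.apply_mem h hg.inv, fun h => hO.apply_mem h hg⟩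

theorem exists_isAut (hO : IsAutOrbit E O) {x y : V} (hx : x ∈ O) (hy : y ∈ O) :
    ∃ g : Equiv.Perm V, IsAut E g ∧ g x = y :=
  (hO.2 x hx y).mp hy

theorem exists_rel_of_rel {R : V → V → Prop}
    (hR : ∀ g, IsAut E g → ∀ u v, R u v → R (g u) (g v))
    (hO : IsAutOrbit E O) (hO' : IsAutOrbit E O') {a b : V} (ha : a ∈ O) (hb : b ∈ O')
    (hab : R a b) {a' : V} (ha' : a' ∈ O) : ∃ b' ∈ O', R a' b' := by
  obtain ⟨g, hg, rfl⟩ := hO.exists_isAut ha ha'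
  exact ⟨g b, hO'.apply_mem hb hg, hR g hg a b hab⟩

theorem exists_out_adj (hO : IsAutOrbit E O) (hO' : IsAutOrbit E O') {a b : V} (ha : a ∈ O)
    (hb : b ∈ O') (hab : E a b) {a' : V} (ha' : a' ∈ O) : ∃ b' ∈ O', E a' b' :=
  hO.exists_rel_of_rel (fun _ hg => hg) hO' ha hb hab ha'

theorem exists_in_adj (hO : IsAutOrbit E O) (hO' : IsAutOrbit E O') {a b : V} (ha : a ∈ O)
    (hb : b ∈ O') (hab : E a b) {b' : V} (hb' : b' ∈ O') : ∃ a' ∈ O, E a' b' :=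
  hO'.exists_rel_of_rel (R := flip E) (fun _ hg u v => hg v u) hO hb ha hab hb'

theorem ncard_sep_adj_eq [Finite V] {S : Set V} (hO : IsAutOrbit E O)
    (hS : IsAutOrbit E S) {x x' : V} (hx : x ∈ O) (hx' : x' ∈ O) :
    {z ∈ S | E x z}.ncard = {z ∈ S | E x' z}.ncard := by
  obtain ⟨g, hg, rfl⟩ := hO.exists_isAut hx hx'
  exact (hg.ncard_sep_apply_adj (hS.apply_mem_iff hg) x).symm

end IsAutOrbit

namespace IsQBMG

variable {U W : Set V}

theorem swap (hG : IsQBMG E U W) : IsQBMG E W U := by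
  obtain ⟨hirr, ⟨hcov, hdisj, hcol⟩, hN1, hN2, hN3⟩ := hG
  exact ⟨hirr, ⟨fun v => (hcov v).symm, fun v hv => hdisj v hv.symm,
    fun u v huv => (hcol u v huv).symm⟩, hN1, hN2, hN3⟩

theorem adj_of_adj_of_not_adj (hG : IsQBMG E U W) {x x' y z : V} (hx : x ∈ U) (hx' : x' ∈ U)
    (h : E x y) (h' : E x' y) (hz : E z x') (hnz : ¬E z x) : E x z := by
  obtain ⟨-, ⟨-, hdisj, hcol⟩, hN1, -, -⟩ := hG
  have hzx : z ≠ x := by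
    rintro rfl
    rcases hcol z x' hz with ⟨-, hx'W⟩ | ⟨hzW, -⟩
    exacts [hdisj x' ⟨hx', hx'W⟩, hdisj z ⟨hx, hzW⟩]
  by_contra hxz
  exact hN1 z x hzx hnz hxz y x' ⟨hz, h, h'⟩

theorem setOf_adj_subset_or_subset (hG : IsQBMG E U W) {x x' y : V} (hx : x ∈ U)
    (hx' : x' ∈ U) (h : E x y) (h' : E x' y) :
    {z | E z x} ⊆ {z | E z x'} ∨ {z | E z x'} ⊆ {z | E z x} := by
  by_contra hc
  obtain ⟨z, hzx, hzx'⟩ := Set.not_subset.mp (not_or.mp hc).1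
  obtain ⟨z', hz'x', hz'x⟩ := Set.not_subset.mp (not_or.mp hc).2
  exact hzx' (hG.2.2.2.1 z x z' x' hzx (hG.adj_of_adj_of_not_adj hx hx' h h' hz'x' hz'x) hz'x')

theorem eq_of_adj_of_mem_isAutOrbit [Finite V] (hG : IsQBMG E U W)
    (hthin : ∀ x y, dotSim E x y → x = y) {O : Set V} (hOU : O ⊆ U) (hO : IsAutOrbit E O)
    {x x' y : V} (hx : x ∈ O) (hx' : x' ∈ O) (h : E x y) (h' : E x' y) : x = x' := by
  obtain ⟨g, hg, rfl⟩ := hO.exists_isAut hx hx'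
  have hout : {z | E x z} = {z | E (g x) z} :=
    Set.eq_of_subset_or_subset_of_ncard_eq (hG.2.2.2.2 x (g x) y h h')
      (hg.ncard_setOf_apply_adj x).symm
  have hin : {z | E z x} = {z | E z (g x)} :=
    Set.eq_of_subset_or_subset_of_ncard_eq (hG.setOf_adj_subset_or_subset (hOU hx) (hOU hx') h h')
      (hg.ncard_setOf_adj_apply x).symm
  exact hthin _ _ ⟨fun z => Set.ext_iff.mp hout z, fun z => Set.ext_iff.mp hin z⟩

end IsQBMG

theorem adj_comm_of_back_adj {U₁ W₁ : Set V} (hN2 : AxN2 E) (hU₁ : IsAutOrbit E U₁)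
    (hW₁ : IsAutOrbit E W₁) (hinjU : ∀ x ∈ U₁, ∀ x' ∈ U₁, ∀ y, E x y → E x' y → x = x')
    (hinjW : ∀ y ∈ W₁, ∀ y' ∈ W₁, ∀ x, E y x → E y' x → y = y')
    {x₁ y₁ x₀ y₀ : V} (hx₁ : x₁ ∈ U₁) (hy₁ : y₁ ∈ W₁) (hedge : E x₁ y₁)
    (hx₀ : x₀ ∈ U₁) (hy₀ : y₀ ∈ W₁) (hback : E y₀ x₀) :
    ∀ x ∈ U₁, ∀ y ∈ W₁, E x y ↔ E y x := by
  have hsymm : E x₀ y₀ := by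
    obtain ⟨y, -, hx₀y⟩ := hU₁.exists_out_adj hW₁ hx₁ hy₁ hedge hx₀
    obtain ⟨x, hx, hxy₀⟩ := hU₁.exists_in_adj hW₁ hx₁ hy₁ hedge hy₀
    rwa [hinjU x hx x₀ hx₀ y (hN2 x y₀ x₀ y hxy₀ hback hx₀y) hx₀y] at hxy₀
  have hinv : ∀ g, IsAut E g → ∀ u v, E u v ∧ E v u → E (g u) (g v) ∧ E (g v) (g u) :=
    fun _ hg u v h => ⟨hg u v h.1, hg v u h.2⟩
  intro x hx y hy
  constructor
  · intro hxy
    obtain ⟨x', hx', hx'y, hyx'⟩ := hW₁.exists_rel_of_rel (R := fun y x => E x y ∧ E y x)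
      (fun g hg u v h => hinv g hg v u h) hU₁ hy₀ hx₀ ⟨hsymm, hback⟩ hy
    rwa [hinjU x hx x' hx' y hxy hx'y]
  · intro hyx
    obtain ⟨y', hy', hxy', hy'x⟩ := hU₁.exists_rel_of_rel hinv hW₁ hx₀ hy₀ ⟨hsymm, hback⟩ hx
    rwa [hinjW y hy y' hy' x hyx hy'x]

end

theorem stmt_11_general {V : Type*} [Fintype V] (E : V → V → Prop)
    (U W U₁ W₁ : Set V) (hG : IsQBMG E U W) (hthin : ∀ x y, dotSim E x y → x = y)
    (hU₁ : U₁ ⊆ U) (hW₁ : W₁ ⊆ W)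
    (hOrbU : IsAutOrbit E U₁) (hOrbW : IsAutOrbit E W₁)
    (x₁ : V) (hx₁ : x₁ ∈ U₁) (y₁ : V) (hy₁ : y₁ ∈ W₁) (hedge : E x₁ y₁) :
    ((∀ y ∈ W₁, ∀ x ∈ U₁, ¬E y x) ∧
     (∀ y ∈ W₁, ∃! x, x ∈ U₁ ∧ E x y) ∧
     (∀ x ∈ U₁, ∀ x' ∈ U₁, x ≠ x' → ∀ y ∈ W₁, ¬(E x y ∧ E x' y)) ∧
     (∃ d : ℕ, (∀ x ∈ U₁, {y ∈ W₁ | E x y}.ncard = d) ∧ d * U₁.ncard = W₁.ncard) ∧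
     (U₁.ncard = W₁.ncard → ∀ x ∈ U₁, ∃! y, y ∈ W₁ ∧ E x y)) ∨
    ((∀ x ∈ U₁, ∀ y ∈ W₁, (E x y ↔ E y x)) ∧
     (∀ x ∈ U₁, ∃! y, y ∈ W₁ ∧ E x y) ∧
     (∀ y ∈ W₁, ∃! x, x ∈ U₁ ∧ E x y)) := by
  have hinjU : ∀ x ∈ U₁, ∀ x' ∈ U₁, ∀ y, E x y → E x' y → x = x' :=
    fun x hx x' hx' y => hG.eq_of_adj_of_mem_isAutOrbit hthin hU₁ hOrbU hx hx'
  have hinjW : ∀ y ∈ W₁, ∀ y' ∈ W₁, ∀ x, E y x → E y' x → y = y' :=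
    fun y hy y' hy' x => hG.swap.eq_of_adj_of_mem_isAutOrbit hthin hW₁ hOrbW hy hy'
  have hin : ∀ y ∈ W₁, ∃! x, x ∈ U₁ ∧ E x y := fun y hy => by
    obtain ⟨x, hx, hxy⟩ := hOrbU.exists_in_adj hOrbW hx₁ hy₁ hedge hy
    exact ⟨x, ⟨hx, hxy⟩, fun x' hx' => hinjU x' hx'.1 x hx y hx'.2 hxy⟩
  by_cases hback : ∃ y ∈ W₁, ∃ x ∈ U₁, E y x
  · obtain ⟨y₀, hy₀, x₀, hx₀, hyx₀⟩ := hback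
    have hcomm :=
      adj_comm_of_back_adj hG.2.2.2.1 hOrbU hOrbW hinjU hinjW hx₁ hy₁ hedge hx₀ hy₀ hyx₀
    refine Or.inr ⟨hcomm, fun x hx => ?_, hin⟩
    obtain ⟨y, hy, hxy⟩ := hOrbU.exists_out_adj hOrbW hx₁ hy₁ hedge hx
    exact ⟨y, ⟨hy, hxy⟩, fun y' hy' => hinjW y' hy'.1 y hy x
      ((hcomm x hx y' hy'.1).mp hy'.2) ((hcomm x hx y hy).mp hxy)⟩
  · push Not at hback
    have hdeg : ∀ x ∈ U₁, {y ∈ W₁ | E x y}.ncard = {y ∈ W₁ | E x₁ y}.ncard :=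
      fun x hx => hOrbU.ncard_sep_adj_eq hOrbW hx hx₁
    have hcount := mul_ncard_eq_ncard_of_existsUnique hdeg hin
    refine Or.inl ⟨hback, hin, fun x hx x' hx' hne y _ h => hne (hinjU x hx x' hx' y h.1 h.2),
      ⟨_, hdeg, hcount⟩, fun hUW x hx => ?_⟩
    have hd : {y ∈ W₁ | E x₁ y}.ncard = 1 :=
      (Nat.mul_eq_right ((Set.ncard_pos).mpr hOrbU.1 : 0 < U₁.ncard).ne').mp (hUW ▸ hcount)
    obtain ⟨y, hy⟩ := Set.ncard_eq_one.mp ((hdeg x hx).trans hd)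
    have hy' := Set.ext_iff.mp hy
    exact ⟨y, (hy' y).mpr rfl, fun y' h => (hy' y').mp h⟩

/-- Let `G` be a finite thin 2-qBMG with color classes `U`, `W`, let
`U₁ ⊆ U` and `W₁ ⊆ W` be orbits of `Aut(G)`, and let `G₁` be the subdigraph induced on
`U₁ ∪ W₁`.  If some `x₁ ∈ U₁`, `y₁ ∈ W₁` satisfy `x₁y₁ ∈ E`, then either
(i) `G₁` is a disjoint union of directed stars with centers in `U₁`: there is no edge of
`G₁` with tail in `W₁`, every vertex of `W₁` has exactly one in-neighbor in `G₁`,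
distinct vertices of `U₁` have disjoint out-neighborhoods in `G₁`, all vertices of `U₁`
have the same out-degree `d` in `G₁` with `d·|U₁| = |W₁|` (and if `|U₁| = |W₁|` then
`G₁` consists of pairwise disjoint edges directed from `U₁` to `W₁`); or
(ii) the edges of `G₁` form a perfect matching of symmetric edges between `U₁` and `W₁`. -/
theorem stmt_11 {V : Type*} [Fintype V] [DecidableEq V] (E : V → V → Prop)
    (U W U₁ W₁ : Set V) (hG : IsQBMG E U W) (hthin : ∀ x y, dotSim E x y → x = y)
    (hU₁ : U₁ ⊆ U) (hW₁ : W₁ ⊆ W)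
    (hOrbU : IsAutOrbit E U₁) (hOrbW : IsAutOrbit E W₁)
    (x₁ : V) (hx₁ : x₁ ∈ U₁) (y₁ : V) (hy₁ : y₁ ∈ W₁) (hedge : E x₁ y₁) :
    ((∀ y ∈ W₁, ∀ x ∈ U₁, ¬E y x) ∧
     (∀ y ∈ W₁, ∃! x, x ∈ U₁ ∧ E x y) ∧
     (∀ x ∈ U₁, ∀ x' ∈ U₁, x ≠ x' → ∀ y ∈ W₁, ¬(E x y ∧ E x' y)) ∧
     (∃ d : ℕ, (∀ x ∈ U₁, {y ∈ W₁ | E x y}.ncard = d) ∧ d * U₁.ncard = W₁.ncard) ∧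
     (U₁.ncard = W₁.ncard → ∀ x ∈ U₁, ∃! y, y ∈ W₁ ∧ E x y)) ∨
    ((∀ x ∈ U₁, ∀ y ∈ W₁, (E x y ↔ E y x)) ∧
     (∀ x ∈ U₁, ∃! y, y ∈ W₁ ∧ E x y) ∧
     (∀ y ∈ W₁, ∃! x, x ∈ U₁ ∧ E x y)) :=
  stmt_11_general E U W U₁ W₁ hG hthin hU₁ hW₁ hOrbU hOrbW x₁ hx₁ y₁ hy₁ hedge
end

section
/- Let m ≥ 1 and let U₁, W₁, U₂, W₂ be pairwise disjoint sets, each of size m. Let α : U₁ → W₁, β : W₁ → U₂ and γ : U₂ → W₂ be bijections, and set δ = γ ∘ β ∘ α. Let G be the digraph on vertex set V = U₁ ∪ U₂ ∪ W₁ ∪ W₂ with color classes U = U₁ ∪ U₂ and W = W₁ ∪ W₂, whose edges are exactly: u α(u) for every u ∈ U₁; w β(w) for every w ∈ W₁; u γ(u) for every u ∈ U₂; and u δ(u) for every u ∈ U₁. Then G is a thin proper 2-qBMG. -/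
/-- The edge relation of Example "ex2310204": on the disjoint union
`U₁ ⊔ W₁ ⊔ U₂ ⊔ W₂`, the edges are exactly `u → α u` (`u ∈ U₁`), `w → β w` (`w ∈ W₁`),
`u → γ u` (`u ∈ U₂`) and `u → δ u = γ (β (α u))` (`u ∈ U₁`). -/
def exEdges {U₁ W₁ U₂ W₂ : Type*} (α : U₁ ≃ W₁) (β : W₁ ≃ U₂) (γ : U₂ ≃ W₂) :
    (U₁ ⊕ W₁ ⊕ U₂ ⊕ W₂) → (U₁ ⊕ W₁ ⊕ U₂ ⊕ W₂) → Prop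
  | Sum.inl u, Sum.inr (Sum.inl w) => w = α u
  | Sum.inr (Sum.inl w), Sum.inr (Sum.inr (Sum.inl u)) => u = β w
  | Sum.inr (Sum.inr (Sum.inl u)), Sum.inr (Sum.inr (Sum.inr w)) => w = γ u
  | Sum.inl u, Sum.inr (Sum.inr (Sum.inr w)) => w = γ (β (α u))
  | _, _ => False

/-- The color class `U = U₁ ∪ U₂` of the example. -/
def exU (U₁ W₁ U₂ W₂ : Type*) : Set (U₁ ⊕ W₁ ⊕ U₂ ⊕ W₂) :=
  {v | match v with
       | Sum.inl _ => True
       | Sum.inr (Sum.inr (Sum.inl _)) => True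
       | _ => False}

/-- The color class `W = W₁ ∪ W₂` of the example. -/
def exW (U₁ W₁ U₂ W₂ : Type*) : Set (U₁ ⊕ W₁ ⊕ U₂ ⊕ W₂) :=
  {v | match v with
       | Sum.inr (Sum.inl _) => True
       | Sum.inr (Sum.inr (Sum.inr _)) => True
       | _ => False}

/-! The digraph is the disjoint union, over `u ∈ U₁`, of copies of the digraph on the layers
`0 → 1 → 2 → 3` with the shortcut `0 → 3`, the copy of `u` being `u, α u, β (α u), γ (β (α u))`.
The axioms (N1)–(N3), the coloring by the parity of the layer, thinness and the walk of length
three are checked on this four-vertex pattern by computation; they pass to disjoint unions of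
copies (thinness because no vertex of the pattern is isolated) and along isomorphisms. -/

open Function

def IsThin {V : Type*} (E : V → V → Prop) : Prop :=
  ∀ x y, dotSim E x y → x = y

def HasThreeEdgeWalk {V : Type*} (E : V → V → Prop) : Prop :=
  ∃ u v w t, E u v ∧ E v w ∧ E w t

def disjointCopies {ι P : Type*} (R : P → P → Prop) (x y : ι × P) : Prop :=
  x.1 = y.1 ∧ R x.2 y.2

section Comap

variable {V X : Type*} {F : X → X → Prop}

theorem IsQBMG.comap {U W : Set X} (hF : IsQBMG F U W) {f : V → X} (hf : Injective f) :
    IsQBMG (F on f) (f ⁻¹' U) (f ⁻¹' W) := by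
  obtain ⟨hirr, ⟨hcov, hdisj, hcol⟩, hN1, hN2, hN3⟩ := hF
  refine ⟨fun v => hirr (f v), ⟨fun v => hcov (f v), fun v => hdisj (f v),
    fun u v => hcol (f u) (f v)⟩, ?_, fun u v w t => hN2 (f u) (f v) (f w) (f t), ?_⟩
  · exact fun u v huv huv' hvu w t => hN1 (f u) (f v) (hf.ne huv) huv' hvu (f w) (f t)
  · intro u v w huw hvw
    exact (hN3 (f u) (f v) (f w) huw hvw).imp (fun h z => h (f z)) (fun h z => h (f z))

theorem IsThin.comap (hF : IsThin F) (e : V ≃ X) : IsThin (F on e) := by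
  rintro x y ⟨hout, hin⟩
  exact e.injective (hF _ _ ⟨e.surjective.forall.2 hout, e.surjective.forall.2 hin⟩)

theorem HasThreeEdgeWalk.comap (hF : HasThreeEdgeWalk F) {f : V → X} (hf : Surjective f) :
    HasThreeEdgeWalk (F on f) := by
  obtain ⟨u, v, w, t, h⟩ := hF
  exact ⟨surjInv hf u, surjInv hf v, surjInv hf w, surjInv hf t,
    by simpa only [onFun, surjInv_eq hf]⟩

end Comap

section Copies

variable {ι P : Type*} {R : P → P → Prop}

theorem IsQBMG.disjointCopies {U W : Set P} (hR : IsQBMG R U W) :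
    IsQBMG (disjointCopies (ι := ι) R) (Prod.snd ⁻¹' U) (Prod.snd ⁻¹' W) := by
  obtain ⟨hirr, ⟨hcov, hdisj, hcol⟩, hN1, hN2, hN3⟩ := hR
  refine ⟨fun v h => hirr v.2 h.2, ⟨fun v => hcov v.2, fun v => hdisj v.2,
    fun u v h => hcol u.2 v.2 h.2⟩, ?_, ?_, ?_⟩
  · rintro ⟨a, i⟩ ⟨b, j⟩ hne hij hji ⟨c, k⟩ ⟨d, l⟩ ⟨⟨had, hil⟩, ⟨hbc, hjk⟩, ⟨hdc, hlk⟩⟩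
    dsimp only at had hbc hdc
    subst had hdc hbc
    exact hN1 i j (fun h => hne (h ▸ rfl)) (fun h => hij ⟨rfl, h⟩) (fun h => hji ⟨rfl, h⟩) k l
      ⟨hil, hjk, hlk⟩
  · rintro ⟨a, i⟩ ⟨b, j⟩ ⟨c, k⟩ ⟨d, l⟩ ⟨rfl, hij⟩ ⟨rfl, hjk⟩ ⟨rfl, hkl⟩
    exact ⟨rfl, hN2 i j k l hij hjk hkl⟩
  · rintro ⟨a, i⟩ ⟨b, j⟩ ⟨c, k⟩ ⟨rfl, hik⟩ ⟨rfl, hjk⟩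
    exact (hN3 i j k hik hjk).imp (fun h z hz => ⟨hz.1, h _ hz.2⟩)
      (fun h z hz => ⟨hz.1, h _ hz.2⟩)

theorem IsThin.disjointCopies (hR : IsThin R) (hR' : ∀ i, ∃ j, R i j ∨ R j i) :
    IsThin (disjointCopies (ι := ι) R) := by
  rintro ⟨a, i⟩ ⟨b, j⟩ ⟨hout, hin⟩
  have hab : a = b := by
    obtain ⟨k, hik | hki⟩ := hR' i
    · exact ((hout (a, k)).1 ⟨rfl, hik⟩).1.symm
    · exact ((hin (a, k)).1 ⟨rfl, hki⟩).1
  subst hab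
  exact congrArg _ <| hR i j
    ⟨fun k => and_congr_right_iff.1 (hout (a, k)) rfl,
      fun k => and_congr_right_iff.1 (hin (a, k)) rfl⟩

theorem HasThreeEdgeWalk.disjointCopies [Nonempty ι] (hR : HasThreeEdgeWalk R) :
    HasThreeEdgeWalk (disjointCopies (ι := ι) R) := by
  obtain ⟨u, v, w, t, h⟩ := hR
  obtain ⟨a⟩ := ‹Nonempty ι›
  exact ⟨(a, u), (a, v), (a, w), (a, t), ⟨rfl, h.1⟩, ⟨rfl, h.2.1⟩, ⟨rfl, h.2.2⟩⟩

end Copies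

def layerPattern (i j : Fin 4) : Prop :=
  j.val = i.val + 1 ∨ (i = 0 ∧ j = 3)

instance : DecidableRel layerPattern := fun i j => by unfold layerPattern; infer_instance

theorem isQBMG_layerPattern :
    IsQBMG layerPattern {i | Even i.val} {i | Odd i.val} := by
  simp only [IsQBMG, IsTwoColored, AxN1, AxN2, AxN3, Set.mem_ofPred_eq]
  refine ⟨?_, ⟨?_, ?_, ?_⟩, ?_, ?_, ?_⟩ <;> decide

theorem isThin_layerPattern : IsThin layerPattern := by
  unfold IsThin dotSim
  decide

theorem layerPattern_exists_adj (i : Fin 4) : ∃ j, layerPattern i j ∨ layerPattern j i := by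
  revert i; decide

theorem hasThreeEdgeWalk_layerPattern : HasThreeEdgeWalk layerPattern :=
  ⟨0, 1, 2, 3, by decide⟩

section Example

variable {U₁ W₁ U₂ W₂ : Type*} (α : U₁ ≃ W₁) (β : W₁ ≃ U₂) (γ : U₂ ≃ W₂)

def layerEquiv : U₁ ⊕ W₁ ⊕ U₂ ⊕ W₂ ≃ U₁ × Fin 4 where
  toFun
    | .inl u => (u, 0)
    | .inr (.inl w) => (α.symm w, 1)
    | .inr (.inr (.inl u)) => (α.symm (β.symm u), 2)
    | .inr (.inr (.inr w)) => (α.symm (β.symm (γ.symm w)), 3)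
  invFun
    | (u, 0) => .inl u
    | (u, 1) => .inr (.inl (α u))
    | (u, 2) => .inr (.inr (.inl (β (α u))))
    | (u, 3) => .inr (.inr (.inr (γ (β (α u)))))
  left_inv := by rintro (u | w | u | w) <;> simp
  right_inv := by rintro ⟨u, i⟩; fin_cases i <;> simp

theorem exEdges_eq_onFun_layerEquiv :
    exEdges α β γ = (disjointCopies layerPattern on layerEquiv α β γ) := by
  ext x y
  rcases x with u | w | u | w <;> rcases y with u' | w' | u' | w' <;>
    simp [exEdges, disjointCopies, layerEquiv, layerPattern, onFun, eq_comm, Equiv.eq_symm_apply]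

theorem exU_eq_preimage_layerEquiv :
    exU U₁ W₁ U₂ W₂ = layerEquiv α β γ ⁻¹' (Prod.snd ⁻¹' {i | Even i.val}) := by
  ext (u | w | u | w) <;> simp [exU, layerEquiv, Nat.even_iff]

theorem exW_eq_preimage_layerEquiv :
    exW U₁ W₁ U₂ W₂ = layerEquiv α β γ ⁻¹' (Prod.snd ⁻¹' {i | Odd i.val}) := by
  ext (u | w | u | w) <;> simp [exW, layerEquiv, Nat.odd_iff]

end Example

theorem stmt_13_general {U₁ W₁ U₂ W₂ : Type*}
    [Fintype U₁]
    (m : ℕ) (hm : 1 ≤ m)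
    (hU₁ : Fintype.card U₁ = m)
    (α : U₁ ≃ W₁) (β : W₁ ≃ U₂) (γ : U₂ ≃ W₂) :
    IsQBMG (exEdges α β γ) (exU U₁ W₁ U₂ W₂) (exW U₁ W₁ U₂ W₂) ∧
    (∀ x y, dotSim (exEdges α β γ) x y → x = y) ∧
    (∃ u v w t, exEdges α β γ u v ∧ exEdges α β γ v w ∧ exEdges α β γ w t) := by
  have : Nonempty U₁ := Fintype.card_pos_iff.mp (by omega)
  rw [exEdges_eq_onFun_layerEquiv, exU_eq_preimage_layerEquiv α β γ,
    exW_eq_preimage_layerEquiv α β γ]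
  exact ⟨isQBMG_layerPattern.disjointCopies.comap (layerEquiv α β γ).injective,
    (isThin_layerPattern.disjointCopies layerPattern_exists_adj).comap _,
    hasThreeEdgeWalk_layerPattern.disjointCopies.comap (layerEquiv α β γ).surjective⟩

/-- Let `U₁, W₁, U₂, W₂` be pairwise disjoint sets of size `m ≥ 1`,
let `α : U₁ → W₁`, `β : W₁ → U₂`, `γ : U₂ → W₂` be bijections and `δ = γ ∘ β ∘ α`.
The digraph on `U₁ ∪ U₂ ∪ W₁ ∪ W₂` with color classes `U₁ ∪ U₂` and `W₁ ∪ W₂` and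
edges exactly `u α(u)`, `w β(w)`, `u γ(u)`, `u δ(u)` is a thin proper 2-qBMG. -/
theorem stmt_13 {U₁ W₁ U₂ W₂ : Type*}
    [Fintype U₁] [Fintype W₁] [Fintype U₂] [Fintype W₂]
    [DecidableEq U₁] [DecidableEq W₁] [DecidableEq U₂] [DecidableEq W₂]
    (m : ℕ) (hm : 1 ≤ m)
    (hU₁ : Fintype.card U₁ = m) (hW₁ : Fintype.card W₁ = m)
    (hU₂ : Fintype.card U₂ = m) (hW₂ : Fintype.card W₂ = m)
    (α : U₁ ≃ W₁) (β : W₁ ≃ U₂) (γ : U₂ ≃ W₂) :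
    IsQBMG (exEdges α β γ) (exU U₁ W₁ U₂ W₂) (exW U₁ W₁ U₂ W₂) ∧
    (∀ x y, dotSim (exEdges α β γ) x y → x = y) ∧
    (∃ u v w t, exEdges α β γ u v ∧ exEdges α β γ v w ∧ exEdges α β γ w t) :=
  stmt_13_general m hm hU₁ α β γ
end
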